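/- For even m = 2w, the generating function identity G_{ℓ,m}(X)·(1 − (ℓ−2)X − ⋯ − (ℓ−2)X^{w−1} + 2X^w − X^{w−1}) = 1 + 2X + ⋯ + 2X^{w−2} + X^{w−1} + 2X^w holds, where G_{ℓ,m} is the growth series of geodesics from the base point in X_{ℓ,m}, defined via the cone-type recursion with the extra transition allowing type-w vertices to be reached from both left and right. -/

import Mathlib

/-!
Write `G_t` for the series of geodesics ending in cone type `t` and `H = G_1 + ⋯ + G_w`.
The recursion gives `G_t = X^(t-2) G_2` for `2 ≤ t ≤ w`, and summing the recursions of the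
types `2, …, w` gives `G_2 + ⋯ + G_w = 2XH`, i.e. `G_1 = (1 - 2X) H`. Substituting both into
the recursion of `G_1`, multiplied by `u = 1 + X + ⋯ + X^(w-2)`, leaves the linear equation
`H (u (1 - (ℓ-1) X) + 2 X^w) = ℓ X u`; with `u (1 - X) = 1 - X^(w-1)` this is the claimed
identity for `G = 1 + H`.
-/

open Finset PowerSeries

/-- Geodesic counting sequence for `X_{ℓ,m}` with even `m = 2w`:
`geoCount ℓ w n t` is the number of geodesics of length `n` from the base point
ending at a vertex of cone type `t`.  The base point (type `0`) has `ℓ`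
transitions to type `1`; a vertex of type `t`, `0 < t < w`, gives `ℓ-3`
transitions to type `1`, one to type `2` and one to type `t+1`; type-`w`
vertices are reached from both their left and right predecessors (the extra
rule `X_{R,w-1} → e₁ X_{L,w}`), so every geodesic to a type-`(w-1)` vertex
extends to a geodesic to a type-`w` vertex; a vertex of type `w` gives `ℓ-4`
transitions to type `1` and two to type `2`. -/
def geoCount (ℓ w : ℕ) : ℕ → ℕ → ℚ
  | 0, t => if t = 0 then 1 else 0
  | n + 1, t =>
    if t = 1 then
      (ℓ : ℚ) * geoCount ℓ w n 0
        + ((ℓ : ℚ) - 3) * ∑ s ∈ Finset.Ico 1 w, geoCount ℓ w n s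
        + ((ℓ : ℚ) - 4) * geoCount ℓ w n w
    else if t = 2 then
      geoCount ℓ w n 1 + (∑ s ∈ Finset.Ico 1 w, geoCount ℓ w n s)
        + 2 * geoCount ℓ w n w
    else if 3 ≤ t ∧ t ≤ w then geoCount ℓ w n (t - 1)
    else 0

theorem PowerSeries.mk_eq_X_mul {R : Type*} [Semiring R] {f : ℕ → R} {g : R⟦X⟧}
    (h0 : f 0 = 0) (hsucc : ∀ n, f (n + 1) = coeff n g) : mk f = X * g := by
  ext (_ | n)
  · simp [h0]
  · rw [coeff_succ_X_mul, coeff_mk, hsucc]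

theorem Finset.sum_Ico_one_pow_eq_mul_geom_sum {R : Type*} [Semiring R] (x : R) (n : ℕ) :
    ∑ k ∈ Ico 1 (n + 1), x ^ k = x * ∑ k ∈ range n, x ^ k := by
  rw [sum_Ico_eq_sum_range, Nat.add_sub_cancel, mul_sum]
  simp only [add_comm 1, pow_succ']

noncomputable def geoSeries (ℓ w t : ℕ) : ℚ⟦X⟧ :=
  mk fun n => geoCount ℓ w n t

section geoSeries

variable (ℓ w : ℕ)

theorem geoSeries_zero : geoSeries ℓ w 0 = 1 := by
  ext (_ | n) <;> simp [geoSeries, geoCount]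

theorem geoSeries_one :
    geoSeries ℓ w 1 = X * (C (ℓ : ℚ) + C ((ℓ : ℚ) - 3) * ∑ t ∈ Ico 1 w, geoSeries ℓ w t
      + C ((ℓ : ℚ) - 4) * geoSeries ℓ w w) := by
  refine mk_eq_X_mul (by simp [geoCount]) fun n => ?_
  rw [← mul_one (C (ℓ : ℚ)), ← geoSeries_zero ℓ w]
  simp only [geoCount, if_true, map_add, coeff_C_mul, map_sum, geoSeries, coeff_mk]

theorem geoSeries_two :
    geoSeries ℓ w 2 = X * (geoSeries ℓ w 1 + ∑ t ∈ Ico 1 w, geoSeries ℓ w t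
      + 2 * geoSeries ℓ w w) := by
  refine mk_eq_X_mul (by simp [geoCount]) fun n => ?_
  rw [← map_ofNat C 2]
  simp only [geoCount, map_add, coeff_C_mul, map_sum, geoSeries, coeff_mk]
  simp

variable {ℓ w}

theorem geoSeries_of_three_le {t : ℕ} (h3 : 3 ≤ t) (htw : t ≤ w) :
    geoSeries ℓ w t = X * geoSeries ℓ w (t - 1) := by
  refine mk_eq_X_mul (by rw [geoCount, if_neg (by omega)]) fun n => ?_
  rw [geoCount, if_neg (by omega), if_neg (by omega), if_pos ⟨h3, htw⟩, geoSeries, coeff_mk]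

theorem geoSeries_add_two {k : ℕ} (hk : k + 2 ≤ w) :
    geoSeries ℓ w (k + 2) = X ^ k * geoSeries ℓ w 2 := by
  induction k with
  | zero => rw [pow_zero, one_mul]
  | succ k ih =>
    rw [geoSeries_of_three_le (by omega) hk, show k + 1 + 2 - 1 = k + 2 by omega, ih (by omega),
      pow_succ', mul_assoc]

theorem sum_Ico_two_geoSeries_eq_geom_mul (hw : 2 ≤ w) :
    ∑ t ∈ Ico 2 (w + 1), geoSeries ℓ w t = (∑ k ∈ range (w - 1), X ^ k) * geoSeries ℓ w 2 := by
  rw [sum_Ico_eq_sum_range, sum_mul, show w + 1 - 2 = w - 1 by omega]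
  refine sum_congr rfl fun k hk => ?_
  rw [add_comm, geoSeries_add_two (by have := mem_range.1 hk; omega)]

theorem sum_Ico_two_geoSeries_eq_two_X_mul (hw : 2 ≤ w) :
    ∑ t ∈ Ico 2 (w + 1), geoSeries ℓ w t = 2 * X * ∑ t ∈ Ico 1 (w + 1), geoSeries ℓ w t := by
  have hshift : ∑ t ∈ Ico 3 (w + 1), geoSeries ℓ w t = X * ∑ t ∈ Ico 2 w, geoSeries ℓ w t := by
    rw [mul_sum, ← sum_Ico_add' _ 2 w 1]
    refine sum_congr rfl fun t ht => ?_
    obtain ⟨h2t, htw⟩ := mem_Ico.1 ht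
    rw [geoSeries_of_three_le (by omega) (by omega), Nat.add_sub_cancel]
  rw [sum_eq_sum_Ico_succ_bot (by omega : 2 < w + 1), hshift, sum_Ico_succ_top (by omega : 1 ≤ w),
    sum_eq_sum_Ico_succ_bot (by omega : 1 < w), geoSeries_two,
    sum_eq_sum_Ico_succ_bot (by omega : 1 < w)]
  ring

theorem geoSeries_one_eq_one_sub_two_X_mul (hw : 2 ≤ w) :
    geoSeries ℓ w 1 = (1 - 2 * X) * ∑ t ∈ Ico 1 (w + 1), geoSeries ℓ w t := by
  have hsplit := sum_eq_sum_Ico_succ_bot (by omega : 1 < w + 1) (geoSeries ℓ w)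
  rw [sum_Ico_two_geoSeries_eq_two_X_mul hw] at hsplit
  linear_combination -hsplit

theorem sum_Ico_one_geoSeries_mul_eq (hw : 2 ≤ w) :
    (∑ t ∈ Ico 1 (w + 1), geoSeries ℓ w t)
        * ((∑ k ∈ range (w - 1), X ^ k) * (1 - C ((ℓ : ℚ) - 1) * X) + 2 * X ^ w)
      = C (ℓ : ℚ) * X * ∑ k ∈ range (w - 1), X ^ k := by
  have h1 := geoSeries_one ℓ w
  rw [geoSeries_one_eq_one_sub_two_X_mul hw] at h1
  set H := ∑ t ∈ Ico 1 (w + 1), geoSeries ℓ w t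
  set u : ℚ⟦X⟧ := ∑ k ∈ range (w - 1), X ^ k
  have hH : H = ∑ t ∈ Ico 1 w, geoSeries ℓ w t + geoSeries ℓ w w :=
    sum_Ico_succ_top (by omega) _
  have htop : geoSeries ℓ w w = X ^ (w - 2) * geoSeries ℓ w 2 := by
    simpa [show w - 2 + 2 = w by omega] using geoSeries_add_two (ℓ := ℓ) (k := w - 2) (by omega)
  have hu : u * geoSeries ℓ w 2 = 2 * X * H := by
    rw [← sum_Ico_two_geoSeries_eq_geom_mul hw, sum_Ico_two_geoSeries_eq_two_X_mul hw]
  have hXw : (X : ℚ⟦X⟧) ^ w = X ^ 2 * X ^ (w - 2) := by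
    rw [← pow_add, show 2 + (w - 2) = w by omega]
  simp only [map_sub, map_natCast, map_ofNat, map_one] at h1 ⊢
  linear_combination u * h1 - (ℓ - 3) * X * u * hH - X * u * htop - X * X ^ (w - 2) * hu
    + 2 * H * hXw

end geoSeries

theorem growth_series_geodesics_general (ℓ w : ℕ) (hw : 3 ≤ w) :
    (PowerSeries.mk fun n => ∑ t ∈ Finset.range (w + 1), geoCount ℓ w n t) *
        (1 - ((ℓ : ℚ) - 2) • (∑ k ∈ Finset.Ico 1 w, (PowerSeries.X : PowerSeries ℚ) ^ k)
          + 2 * (PowerSeries.X : PowerSeries ℚ) ^ w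
          - (PowerSeries.X : PowerSeries ℚ) ^ (w - 1))
      = 1 + (∑ k ∈ Finset.Ico 1 (w - 1), 2 * (PowerSeries.X : PowerSeries ℚ) ^ k)
          + (PowerSeries.X : PowerSeries ℚ) ^ (w - 1)
          + 2 * (PowerSeries.X : PowerSeries ℚ) ^ w := by
  set H := ∑ t ∈ Ico 1 (w + 1), geoSeries ℓ w t
  set u : ℚ⟦X⟧ := ∑ k ∈ range (w - 1), X ^ k
  have hG : (mk fun n => ∑ t ∈ range (w + 1), geoCount ℓ w n t) = 1 + H := by
    rw [← geoSeries_zero ℓ w, ← sum_eq_sum_Ico_succ_bot (by omega), ← range_eq_Ico]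
    ext n
    simp [geoSeries]
  have hP : ∑ k ∈ Ico 1 w, (X : ℚ⟦X⟧) ^ k = X * u := by
    rw [← sum_Ico_one_pow_eq_mul_geom_sum, Nat.sub_add_cancel (by omega)]
  have hQ : ∑ k ∈ Ico 1 (w - 1), (X : ℚ⟦X⟧) ^ k = X * u - X ^ (w - 1) := by
    rw [eq_sub_iff_add_eq, ← hP, ← sum_Ico_succ_top (by omega), Nat.sub_add_cancel (by omega)]
  have hgeom : u * (1 - X) = 1 - X ^ (w - 1) := geom_sum_mul_neg _ _
  have key := sum_Ico_one_geoSeries_mul_eq (ℓ := ℓ) (by omega : 2 ≤ w)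
  rw [hG, hP, ← mul_sum, hQ, smul_eq_C_mul]
  simp only [map_sub, map_natCast, map_ofNat, map_one] at key ⊢
  linear_combination key - H * hgeom

/-- For even `m = 2w`, the growth series `G_{ℓ,m}` of geodesics from
the base point in `X_{ℓ,m}` satisfies
`G_{ℓ,m}(X)·(1 - (ℓ-2)X - ⋯ - (ℓ-2)X^{w-1} + 2X^w - X^{w-1})
  = 1 + 2X + ⋯ + 2X^{w-2} + X^{w-1} + 2X^w` as formal power series. -/
theorem growth_series_geodesics (ℓ w : ℕ) (hℓ : 3 ≤ ℓ) (hw : 3 ≤ w) :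
    (PowerSeries.mk fun n => ∑ t ∈ Finset.range (w + 1), geoCount ℓ w n t) *
        (1 - ((ℓ : ℚ) - 2) • (∑ k ∈ Finset.Ico 1 w, (PowerSeries.X : PowerSeries ℚ) ^ k)
          + 2 * (PowerSeries.X : PowerSeries ℚ) ^ w
          - (PowerSeries.X : PowerSeries ℚ) ^ (w - 1))
      = 1 + (∑ k ∈ Finset.Ico 1 (w - 1), 2 * (PowerSeries.X : PowerSeries ℚ) ^ k)
          + (PowerSeries.X : PowerSeries ℚ) ^ (w - 1)
          + 2 * (PowerSeries.X : PowerSeries ℚ) ^ w :=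
  growth_series_geodesics_general ℓ w hw
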